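/- arXiv:2109.13750 — 7 statements merged into one kernel-verified Lean document; each statement's English description precedes it below -/
import Mathlib

section
/- A direct sum of Mittag-Leffler modules is Mittag-Leffler, and a pure submodule of a Mittag-Leffler module is Mittag-Leffler. -/
/-!
STATEMENT 2: A direct sum of Mittag-Leffler modules is Mittag-Leffler, and a pure
submodule of a Mittag-Leffler module is Mittag-Leffler.
-/

open TensorProduct DirectSum

universe u v

/-- The canonical map `M ⊗ (∏ i, L i) → ∏ i (M ⊗ L i)`. -/
noncomputable def canonicalTensorPi (R : Type u) [CommRing R]
    (M : Type v) [AddCommGroup M] [Module R M]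
    (ι : Type v) (L : ι → Type v) [∀ i, AddCommGroup (L i)] [∀ i, Module R (L i)] :
    TensorProduct R M (∀ i, L i) →ₗ[R] ∀ i, TensorProduct R M (L i) :=
  LinearMap.pi fun i => LinearMap.lTensor M (LinearMap.proj i)

/-- `M` is Mittag-Leffler: for every family of modules `L i`, the canonical map
`M ⊗ ∏ L i → ∏ (M ⊗ L i)` is injective. -/
def IsMittagLeffler (R : Type u) [CommRing R]
    (M : Type v) [AddCommGroup M] [Module R M] : Prop :=
  ∀ (ι : Type v) (L : ι → Type v) [∀ i, AddCommGroup (L i)] [∀ i, Module R (L i)],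
    Function.Injective (canonicalTensorPi R M ι L)

/-- A submodule `N ≤ M` is pure if `N ⊗ L → M ⊗ L` is injective for every module `L`. -/
def IsPureSubmodule (R : Type u) [CommRing R]
    (M : Type v) [AddCommGroup M] [Module R M] (N : Submodule R M) : Prop :=
  ∀ (L : Type v) [AddCommGroup L] [Module R L],
    Function.Injective (LinearMap.rTensor L N.subtype)

/-!
The canonical map `M ⊗ ∏ L i → ∏ (M ⊗ L i)` is natural in `M`. For `N ≤ M` pure, naturality
factors the injective composite `N ⊗ ∏ L i → M ⊗ ∏ L i → ∏ (M ⊗ L i)` through the map for `N`,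
which is therefore injective. For `⨁ j, M j`, an element `z` of the kernel has, by naturality,
each image `(π_j ⊗ 1) z` in the kernel of the map for `M j`, so all of them vanish; since
`(⨁ j, M j) ⊗ X ≃ ⨁ j, M j ⊗ X`, these images determine `z`.
-/

theorem TensorProduct.directSumLeft_apply_eq_rTensor_component {R : Type*} [CommSemiring R]
    {ι : Type*} [DecidableEq ι] (M : ι → Type*) [∀ i, AddCommMonoid (M i)] [∀ i, Module R (M i)]
    (N : Type*) [AddCommMonoid N] [Module R N] (z : (⨁ i, M i) ⊗[R] N) (i : ι) :
    directSumLeft R R M N z i = LinearMap.rTensor N (component R ι M i) z := by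
  induction z using TensorProduct.induction_on with
  | zero => simp
  | tmul m n => rw [directSumLeft_tmul, LinearMap.rTensor_tmul, apply_eq_component R]
  | add x y hx hy => simp [hx, hy]

theorem TensorProduct.eq_zero_of_rTensor_component_eq_zero {R : Type*} [CommSemiring R]
    {ι : Type*} [DecidableEq ι] {M : ι → Type*} [∀ i, AddCommMonoid (M i)] [∀ i, Module R (M i)]
    {N : Type*} [AddCommMonoid N] [Module R N] {z : (⨁ i, M i) ⊗[R] N}
    (hz : ∀ i, LinearMap.rTensor N (component R ι M i) z = 0) : z = 0 := by
  apply (directSumLeft R R M N).injective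
  ext i
  simp [directSumLeft_apply_eq_rTensor_component, hz]

theorem canonicalTensorPi_rTensor_apply (R : Type u) [CommRing R]
    {M N : Type v} [AddCommGroup M] [Module R M] [AddCommGroup N] [Module R N]
    {ι : Type v} (L : ι → Type v) [∀ i, AddCommGroup (L i)] [∀ i, Module R (L i)]
    (f : M →ₗ[R] N) (z : M ⊗[R] (∀ i, L i)) (i : ι) :
    canonicalTensorPi R N ι L (LinearMap.rTensor _ f z) i =
      LinearMap.rTensor (L i) f (canonicalTensorPi R M ι L z i) := by
  induction z using TensorProduct.induction_on with
  | zero => simp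
  | tmul m l => simp [canonicalTensorPi]
  | add x y hx hy => simp only [map_add, Pi.add_apply, hx, hy]

namespace IsMittagLeffler

variable {R : Type u} [CommRing R]

theorem of_rTensor_injective {M N : Type v} [AddCommGroup M] [Module R M]
    [AddCommGroup N] [Module R N] (hM : IsMittagLeffler R M) (f : N →ₗ[R] M)
    (hf : ∀ (L : Type v) [AddCommGroup L] [Module R L], Function.Injective (LinearMap.rTensor L f)) :
    IsMittagLeffler R N := by
  intro ι L _ _ x y hxy
  refine hf _ (hM ι L (funext fun i => ?_))
  rw [canonicalTensorPi_rTensor_apply, canonicalTensorPi_rTensor_apply, hxy]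

theorem of_isPureSubmodule {M : Type v} [AddCommGroup M] [Module R M] {N : Submodule R M}
    (hM : IsMittagLeffler R M) (hN : IsPureSubmodule R M N) : IsMittagLeffler R N :=
  hM.of_rTensor_injective N.subtype hN

theorem directSum {ι : Type v} [DecidableEq ι] {M : ι → Type v}
    [∀ i, AddCommGroup (M i)] [∀ i, Module R (M i)] (hM : ∀ i, IsMittagLeffler R (M i)) :
    IsMittagLeffler R (⨁ i, M i) := by
  intro κ L _ _
  rw [injective_iff_map_eq_zero]
  intro z hz
  refine eq_zero_of_rTensor_component_eq_zero fun i =>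
    (injective_iff_map_eq_zero _).mp (hM i κ L) _ (funext fun k => ?_)
  rw [canonicalTensorPi_rTensor_apply, hz, Pi.zero_apply, Pi.zero_apply, map_zero]

end IsMittagLeffler

theorem directSum_and_pure_submodule_mittagLeffler (R : Type u) [CommRing R] :
    (∀ (ι : Type v) [DecidableEq ι] (M : ι → Type v)
        [∀ i, AddCommGroup (M i)] [∀ i, Module R (M i)],
        (∀ i, IsMittagLeffler R (M i)) → IsMittagLeffler R (⨁ i, M i)) ∧
    (∀ (M : Type v) [AddCommGroup M] [Module R M] (N : Submodule R M),
        IsPureSubmodule R M N → IsMittagLeffler R M → IsMittagLeffler R N) :=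
  ⟨fun _ _ _ _ _ hM => IsMittagLeffler.directSum hM,
    fun _ _ _ _ hN hM => hM.of_isPureSubmodule hN⟩
end

section
/- In the pullback square as above with p : D → D' a pure epimorphism, the submodule X = {(m,d) : f(m) = p(d)} is a pure submodule of M ⊕ D. -/
/-!
STATEMENT 7: In the pullback square with `p : D → D'` a pure epimorphism, the pullback
`X = {(m, d) : f m = p d}` is a pure submodule of `M ⊕ D`.
-/

open TensorProduct

universe u v

/-- A surjection is a pure epimorphism if its kernel is a pure submodule of the domain. -/
def IsPureEpi (R : Type u) [CommRing R]
    {N : Type v} [AddCommGroup N] [Module R N] {M : Type v} [AddCommGroup M] [Module R M]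
    (f : N →ₗ[R] M) : Prop :=
  Function.Surjective f ∧ IsPureSubmodule R N (LinearMap.ker f)

theorem pullback_isPureSubmodule (R : Type u) [CommRing R]
    (M D₁ D₂ : Type v) [AddCommGroup M] [Module R M]
    [AddCommGroup D₁] [Module R D₁] [AddCommGroup D₂] [Module R D₂]
    (f : M →ₗ[R] D₂) (p : D₁ →ₗ[R] D₂) (hp : IsPureEpi R p) :
    IsPureSubmodule R (M × D₁)
      (LinearMap.ker (f.comp (LinearMap.fst R M D₁) - p.comp (LinearMap.snd R M D₁))) := by
  obtain ⟨hsurj, hpure⟩ := hp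
  set X := LinearMap.ker (f.comp (LinearMap.fst R M D₁) - p.comp (LinearMap.snd R M D₁)) with hX
  set K := LinearMap.ker p with hK
  -- inclusion K → X, d ↦ (0, d)
  have hmemX : ∀ d : K, ((0 : M), (d : D₁)) ∈ X := by
    intro d
    simp [hX, LinearMap.mem_ker, d.2]
  let g : K →ₗ[R] X :=
    { toFun := fun d => ⟨((0 : M), (d : D₁)), hmemX d⟩
      map_add' := by intros; ext <;> simp
      map_smul' := by intros; ext <;> simp }
  let π : X →ₗ[R] M := (LinearMap.fst R M D₁).comp X.subtype
  have hπ : Function.Surjective π := by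
    intro m
    obtain ⟨d, hd⟩ := hsurj (f m)
    refine ⟨⟨(m, d), ?_⟩, rfl⟩
    simp [hX, LinearMap.mem_ker, hd]
  have hexact : Function.Exact g π := by
    intro x
    constructor
    · intro hx
      have hx' : (x : M × D₁).1 = 0 := hx
      have hker : (x : M × D₁).2 ∈ K := by
        have := x.2
        simp only [hX, LinearMap.mem_ker, LinearMap.sub_apply, LinearMap.comp_apply,
          LinearMap.fst_apply, LinearMap.snd_apply, sub_eq_zero] at this
        rw [hK, LinearMap.mem_ker, ← this, hx', map_zero]
      exact ⟨⟨_, hker⟩, by ext <;> simp [g, hx'.symm]⟩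
    · rintro ⟨d, rfl⟩
      rfl
  intro L _ _
  rw [injective_iff_map_eq_zero]
  intro t ht
  have htπ : LinearMap.rTensor L π t = 0 := by
    have : LinearMap.rTensor L π t =
        LinearMap.rTensor L (LinearMap.fst R M D₁) (LinearMap.rTensor L X.subtype t) := by
      rw [← LinearMap.rTensor_comp_apply]
    rw [this, ht, map_zero]
  obtain ⟨s, hs⟩ := ((rTensor_exact L hexact hπ) t).mp htπ
  have hcomp : (LinearMap.snd R M D₁).comp (X.subtype.comp g) = K.subtype := by
    ext d; rfl
  have hsK : LinearMap.rTensor L K.subtype s = 0 := by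
    rw [← hcomp, LinearMap.rTensor_comp, LinearMap.rTensor_comp, LinearMap.comp_apply,
      LinearMap.comp_apply, hs, ht, map_zero]
  have : s = 0 := hpure L hsK
  rw [← hs, this, map_zero]
end

section
/- If i : D' → D is a pure monomorphism and f : D' → M any module map, then the antidiagonal image {(f(d), -i(d)) : d ∈ D'} is a pure submodule of M ⊕ D. -/
/-!
STATEMENT 8: If `i : D' → D` is a pure monomorphism and `f : D' → M` any module map,
then the antidiagonal image `{(f d, -i d) : d ∈ D'}` is a pure submodule of `M ⊕ D`.
-/

open TensorProduct

universe u v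

/-- An injective map is a pure monomorphism if it remains injective after tensoring
with any module. -/
def IsPureMono (R : Type u) [CommRing R]
    {N : Type v} [AddCommGroup N] [Module R N] {M : Type v} [AddCommGroup M] [Module R M]
    (i : N →ₗ[R] M) : Prop :=
  Function.Injective i ∧
    ∀ (L : Type v) [AddCommGroup L] [Module R L],
      Function.Injective (LinearMap.rTensor L i)

theorem antidiagonal_isPureSubmodule (R : Type u) [CommRing R]
    (M D' D₀ : Type v) [AddCommGroup M] [Module R M]
    [AddCommGroup D'] [Module R D'] [AddCommGroup D₀] [Module R D₀]
    (i : D' →ₗ[R] D₀) (f : D' →ₗ[R] M) (hi : IsPureMono R i) :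
    IsPureSubmodule R (M × D₀) (LinearMap.range (LinearMap.prod f (-i))) := by
  intro L _ _
  set g := LinearMap.prod f (-i) with hg
  have hginj : Function.Injective g := by
    intro x y hxy
    have := congrArg Prod.snd hxy
    simp only [g, LinearMap.prod_apply, LinearMap.neg_apply, Pi.prod] at this
    exact hi.1 (neg_injective this)
  -- rTensor L g is injective because composing with snd gives -(rTensor L i)
  have hgT : Function.Injective (LinearMap.rTensor L g) := by
    have hcomp : (LinearMap.snd R M D₀).comp g = -i := by
      ext x; simp [g]
    have : LinearMap.rTensor L ((LinearMap.snd R M D₀).comp g)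
        = (LinearMap.rTensor L (LinearMap.snd R M D₀)).comp (LinearMap.rTensor L g) :=
      LinearMap.rTensor_comp L _ _
    have hneg : LinearMap.rTensor L (-i) = -(LinearMap.rTensor L i) := by
      ext x y; simp
    have hinj : Function.Injective (LinearMap.rTensor L (-i)) := by
      rw [hneg]
      intro a b hab
      exact hi.2 L (neg_injective hab)
    rw [← hcomp, this] at hinj
    exact Function.Injective.of_comp hinj
  -- subtype ∘ equiv = g
  intro x y hxy
  let e : D' ≃ₗ[R] LinearMap.range g := LinearEquiv.ofInjective g hginj
  have hfac : (LinearMap.range g).subtype.comp (e : D' →ₗ[R] LinearMap.range g) = g := by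
    ext d <;> rfl
  have hTfac : (LinearMap.rTensor L (LinearMap.range g).subtype).comp
      (LinearMap.rTensor L (e : D' →ₗ[R] LinearMap.range g))
      = LinearMap.rTensor L g := by
    rw [← LinearMap.rTensor_comp, hfac]
  have hsurj : Function.Surjective
      (LinearMap.rTensor L (e : D' →ₗ[R] LinearMap.range g)) :=
    (LinearEquiv.rTensor L e).surjective
  obtain ⟨x', rfl⟩ := hsurj x
  obtain ⟨y', rfl⟩ := hsurj y
  have : LinearMap.rTensor L g x' = LinearMap.rTensor L g y' := by
    rw [← hTfac]; exact hxy
  rw [hgT this]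
end

section
/- Two elements a ⊗ l sum to zero in M ⊗_R L (i.e. ∑ a_i ⊗ l_i = 0 for tuples ā from the right module M and l̄ from the left module L) if and only if there is a pp formula φ(x̄) for right R-modules such that ā ∈ φ(M) and l̄ ∈ Dφ(L), where Dφ is the elementary dual pp formula. -/
/-!
The pair of conditions `ā ∈ φ(M)` (witnessed by `b̄`) and `l̄ ∈ Dφ(L)` says exactly that the
expression `∑ aᵢ ⊗ lᵢ + ∑ bₜ ⊗ 0` vanishes trivially in the sense of the equational criterion,
the matrix of `φ` being the matrix of the trivial vanishing. Conversely, if `∑ aᵢ ⊗ lᵢ = 0`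
then it already vanishes in `M' ⊗ L` for a finitely generated `M' ≤ M` containing `ā`;
extending `ā` by generators `b̄` of `M'` gives a generating family of `M'`, and for generating
families the equational criterion says that vanishing is trivial vanishing.
-/

open TensorProduct

universe u v

/-- A pp formula in `n` free variables: an existentially quantified finite system of
`R`-linear equations `∑ i, A i j • x i + ∑ l, B l j • y l = 0` (j-th equation). -/
structure PPFormula (R : Type u) [Ring R] (n : ℕ) where
  k : ℕ
  m : ℕ
  A : Fin n → Fin m → R
  B : Fin k → Fin m → R

/-- The solution set of a pp formula in a module. -/
def PPFormula.sol {R : Type u} [Ring R] {n : ℕ} (φ : PPFormula R n)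
    (M : Type v) [AddCommGroup M] [Module R M] : Set (Fin n → M) :=
  { a | ∃ b : Fin φ.k → M, ∀ j,
      (∑ i, φ.A i j • a i) + (∑ l, φ.B l j • b l) = 0 }

/-- The elementary dual `Dφ` of a pp formula `φ(x̄) = ∃ȳ (x̄A + ȳB = 0)`, namely
`Dφ(x̄) = ∃z̄ (x̄ = Az̄ ∧ Bz̄ = 0)`; e.g. the dual of `xr = 0` is `r ∣ x`. -/
def PPFormula.dual {R : Type u} [Ring R] {n : ℕ} (φ : PPFormula R n) : PPFormula R n where
  k := φ.m
  m := n + φ.k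
  A := fun i j => Fin.addCases (fun i₀ => if i = i₀ then (1 : R) else 0) (fun _ => (0 : R)) j
  B := fun z j => Fin.addCases (fun i₀ => -φ.A i₀ z) (fun l₀ => φ.B l₀ z) j

namespace TensorProduct

variable {R : Type*} [CommRing R] {M M' N : Type*} [AddCommGroup M] [Module R M]
  [AddCommGroup M'] [Module R M'] [AddCommGroup N] [Module R N]
  {ι : Type*} [Fintype ι]

theorem VanishesTrivially.map {m : ι → M} {n : ι → N} (f : M →ₗ[R] M')
    (h : VanishesTrivially R m n) : VanishesTrivially R (f ∘ m) n := by
  obtain ⟨k, a, y, hy, ha⟩ := h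
  exact ⟨k, a, y, hy, fun j => by simpa using congrArg f (ha j)⟩

theorem sum_tmul_eq_zero_iff_exists_vanishesTrivially_sumElim (m : ι → M) (n : ι → N) :
    ∑ i, m i ⊗ₜ[R] n i = 0 ↔
      ∃ (k : ℕ) (b : Fin k → M), VanishesTrivially R (Sum.elim m b) (Sum.elim n 0) := by
  constructor
  · intro h
    set P := Submodule.span R (Set.range m)
    have hmP (i : ι) : m i ∈ P := Submodule.subset_span ⟨i, rfl⟩
    set t : P ⊗[R] N := ∑ i, ⟨m i, hmP i⟩ ⊗ₜ n i
    have ht : LinearMap.rTensor N P.subtype t = 0 := by simpa [t] using h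
    obtain ⟨Q, hPQ, hQ, htQ⟩ :=
      eq_zero_of_fg_of_subtype_eq_zero (Submodule.fg_span (Set.finite_range m)) ht
    obtain ⟨k, b, hb⟩ := Submodule.fg_iff_exists_fin_generating_family.mp hQ
    have hbQ (t : Fin k) : b t ∈ Q := hb ▸ Submodule.subset_span ⟨t, rfl⟩
    have hmbQ : ∀ x, Sum.elim m b x ∈ Q := Sum.rec (fun i => hPQ (hmP i)) hbQ
    have hspan : Submodule.span R (Set.range fun x => (⟨Sum.elim m b x, hmbQ x⟩ : Q)) = ⊤ := by
      rw [Submodule.span_range_subtype_eq_top_iff, Set.Sum.elim_range, Submodule.span_union, hb]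
      exact sup_eq_right.mpr hPQ
    have hsum : ∑ x, (⟨Sum.elim m b x, hmbQ x⟩ : Q) ⊗ₜ[R] Sum.elim n 0 x = 0 := by
      simpa [Fintype.sum_sum_type, t, Submodule.inclusion_apply] using htQ
    exact ⟨k, b, (vanishesTrivially_of_sum_tmul_eq_zero R hspan hsum).map Q.subtype⟩
  · rintro ⟨k, b, h⟩
    simpa [Fintype.sum_sum_type] using sum_tmul_eq_zero_of_vanishesTrivially R h

end TensorProduct

namespace PPFormula

variable {R : Type*} {n : ℕ}

theorem mem_dual_sol_iff [Ring R] (φ : PPFormula R n) (L : Type*) [AddCommGroup L] [Module R L]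
    (l : Fin n → L) :
    l ∈ φ.dual.sol L ↔
      ∃ c : Fin φ.m → L, (∀ i, l i = ∑ z, φ.A i z • c z) ∧ ∀ t, ∑ z, φ.B t z • c z = 0 := by
  simp only [sol, dual, Fin.forall_fin_add, Fin.addCases_left,
    Fin.addCases_right, ite_smul, one_smul, zero_smul, neg_smul, Finset.sum_neg_distrib,
    Finset.sum_ite_eq', Finset.mem_univ, if_true, add_neg_eq_zero, Finset.sum_const_zero, zero_add]
  rfl

theorem exists_mem_sol_and_mem_dual_sol_iff [CommRing R] (M L : Type*) [AddCommGroup M]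
    [Module R M] [AddCommGroup L] [Module R L] (a : Fin n → M) (l : Fin n → L) :
    (∃ φ : PPFormula R n, a ∈ φ.sol M ∧ l ∈ φ.dual.sol L) ↔
      ∃ (k : ℕ) (b : Fin k → M), VanishesTrivially R (Sum.elim a b) (Sum.elim l 0) := by
  simp only [mem_dual_sol_iff]
  constructor
  · rintro ⟨φ, ⟨b, hb⟩, c, hc, hBc⟩
    refine ⟨φ.k, b, φ.m, Sum.elim φ.A φ.B, c, Sum.rec hc fun t => (hBc t).symm, fun j => ?_⟩
    simpa [Fintype.sum_sum_type] using hb j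
  · rintro ⟨k, b, m, α, c, hc, hα⟩
    refine ⟨⟨k, m, fun i => α (.inl i), fun t => α (.inr t)⟩, ⟨b, fun j => ?_⟩,
      c, fun i => hc (.inl i), fun t => (hc (.inr t)).symm⟩
    simpa [Fintype.sum_sum_type] using hα j

end PPFormula

theorem herzog_criterion (R : Type u) [CommRing R]
    (M : Type v) [AddCommGroup M] [Module R M] (L : Type v) [AddCommGroup L] [Module R L]
    (n : ℕ) (a : Fin n → M) (l : Fin n → L) :
    (∑ i, a i ⊗ₜ[R] l i) = (0 : TensorProduct R M L) ↔
      ∃ φ : PPFormula R n, a ∈ φ.sol M ∧ l ∈ φ.dual.sol L :=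
  (sum_tmul_eq_zero_iff_exists_vanishesTrivially_sumElim a l).trans
    (PPFormula.exists_mem_sol_and_mem_dual_sol_iff M L a l).symm
end

section
/- Let 𝒟 be a definable subcategory. Every pure submodule of a strictly 𝒟-atomic module is strictly 𝒟-atomic, and every direct sum of strictly 𝒟-atomic modules is strictly 𝒟-atomic. -/
open TensorProduct DirectSum

universe u v

/-- A class of modules (closed under isomorphism) is definable if it is closed under
direct products, direct limits and pure submodules. -/
def IsDefinableClass (R : Type u) [CommRing R]
    (D : (M : Type v) → [AddCommGroup M] → [Module R M] → Prop) : Prop :=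
  (∀ (M N : Type v) [AddCommGroup M] [Module R M] [AddCommGroup N] [Module R N],
      (M ≃ₗ[R] N) → D M → D N) ∧
  (∀ (ι : Type v) (L : ι → Type v) [∀ i, AddCommGroup (L i)] [∀ i, Module R (L i)],
      (∀ i, D (L i)) → D (∀ i, L i)) ∧
  (∀ (ι : Type v) [Preorder ι] [IsDirected ι (· ≤ ·)] [Nonempty ι] [DecidableEq ι]
      (G : ι → Type v) [∀ i, AddCommGroup (G i)] [∀ i, Module R (G i)]
      (f : ∀ i j, i ≤ j → G i →ₗ[R] G j) [DirectedSystem G (fun i j h => f i j h)],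
      (∀ i, D (G i)) → D (Module.DirectLimit G f)) ∧
  (∀ (M : Type v) [AddCommGroup M] [Module R M] (N : Submodule R M),
      IsPureSubmodule R M N → D M → D N)

/-- `φ` generates the pp-type of the tuple `a` of `M` modulo the theory of `𝒟`. -/
def DGenerates (R : Type u) [CommRing R]
    (D : (M : Type v) → [AddCommGroup M] → [Module R M] → Prop)
    {n : ℕ} (φ : PPFormula R n)
    (M : Type v) [AddCommGroup M] [Module R M] (a : Fin n → M) : Prop :=
  a ∈ φ.sol M ∧ ∀ ψ : PPFormula R n, a ∈ ψ.sol M →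
    ∀ (N : Type v) [AddCommGroup N] [Module R N], D N → φ.sol N ⊆ ψ.sol N

/-- `M ∈ 𝒟` is `𝒟`-atomic: every pp-type realised in `M` is `𝒟`-finitely generated. -/
def IsDAtomic (R : Type u) [CommRing R]
    (D : (M : Type v) → [AddCommGroup M] → [Module R M] → Prop)
    (M : Type v) [AddCommGroup M] [Module R M] : Prop :=
  D M ∧ ∀ (n : ℕ) (a : Fin n → M), ∃ φ : PPFormula R n, DGenerates R D φ M a

/-- `M ∈ 𝒟` is strictly `𝒟`-atomic: it is `𝒟`-atomic and whenever `φ` `𝒟`-generates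
the pp-type of `ā` in `M`, every `b̄ ∈ φ(N)` with `N ∈ 𝒟` is the image of `ā` under a
morphism `M → N`. -/
def IsStrictlyDAtomic (R : Type u) [CommRing R]
    (D : (M : Type v) → [AddCommGroup M] → [Module R M] → Prop)
    (M : Type v) [AddCommGroup M] [Module R M] : Prop :=
  IsDAtomic R D M ∧
    ∀ (n : ℕ) (a : Fin n → M) (φ : PPFormula R n), DGenerates R D φ M a →
      ∀ (N : Type v) [AddCommGroup N] [Module R N], D N →
        ∀ b ∈ φ.sol N, ∃ f : M →ₗ[R] N, ∀ i, f (a i) = b i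

/-!
The solutions in `M` of a pp formula `∃ b, A a + B b = 0` form the submodule `A⁻¹ (range B)`,
and these submodules are closed under finite sums, uniformly in `M`.

In a pure submodule `N ≤ M` a tuple satisfies the same pp formulas as in `M`: for `c` in `Nᵐ`,
solvability of `B b = c` is the vanishing of the image of `c` in `N ⊗ coker B`, and purity
transfers that vanishing from `M ⊗ coker B`. So a generator of a pp-type in `M` generates it
in `N`, and morphisms out of `M` restrict to `N`.

A tuple `c` of `⨁ Mᵢ` lives in finitely many summands. If `φᵢ` generates the pp-type of the
`i`-th component, then `∑ᵢ φᵢ` generates the pp-type of `c`, and a solution `b = ∑ bᵢ` of it in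
`N ∈ 𝒟` is the image of `c` under the sum of morphisms `Mᵢ → N` sending `cᵢ` to `bᵢ`. Finally
`⨁ Mᵢ ∈ 𝒟` because `⨁ Mᵢ` is pure in `∏ Mᵢ`, tensor products commuting with direct sums.
-/

universe w

namespace Matrix

variable {R : Type u} [CommSemiring R] {P Q : Type*} [Fintype P]

def vecMulMap (C : P → Q → R) (M : Type*) [AddCommMonoid M] [Module R M] :
    (P → M) →ₗ[R] (Q → M) :=
  LinearMap.pi fun q => ∑ p, C p q • LinearMap.proj p

variable {M N : Type*} [AddCommMonoid M] [Module R M] [AddCommMonoid N] [Module R N]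

@[simp]
theorem vecMulMap_apply (C : P → Q → R) (u : P → M) (q : Q) :
    vecMulMap C M u q = ∑ p, C p q • u p := by
  simp [vecMulMap]

theorem vecMulMap_comp (C : P → Q → R) (f : M →ₗ[R] N) (u : P → M) :
    vecMulMap C N (f ∘ u) = f ∘ vecMulMap C M u := by
  ext q
  simp [map_sum]

variable [DecidableEq P] [Fintype Q] [DecidableEq Q]

theorem piScalarRight_lTensor_vecMulMap (C : P → Q → R) (t : M ⊗[R] (P → R)) :
    TensorProduct.piScalarRight R R M Q (LinearMap.lTensor M (vecMulMap C R) t) =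
      vecMulMap C M (TensorProduct.piScalarRight R R M P t) := by
  induction t using TensorProduct.induction_on with
  | zero => simp
  | tmul x r => ext q; simp [Finset.sum_smul, mul_smul]
  | add t t' ht ht' => simp only [map_add, ht, ht']

end Matrix

theorem TensorProduct.piScalarRight_rTensor {R : Type u} [CommSemiring R] {P : Type*}
    [Fintype P] [DecidableEq P] {M N : Type*} [AddCommMonoid M] [Module R M] [AddCommMonoid N]
    [Module R N]
    (f : M →ₗ[R] N) (t : M ⊗[R] (P → R)) :
    piScalarRight R R N P (LinearMap.rTensor _ f t) = f ∘ piScalarRight R R M P t := by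
  induction t using TensorProduct.induction_on with
  | zero => ext; simp
  | tmul x r => ext; simp
  | add t t' ht ht' => ext; simp_all

namespace PPFormula

variable {R : Type u} [CommRing R] {n : ℕ}

def solSubmodule (φ : PPFormula R n) (M : Type*) [AddCommGroup M] [Module R M] :
    Submodule R (Fin n → M) :=
  (LinearMap.range (Matrix.vecMulMap φ.B M)).comap (Matrix.vecMulMap φ.A M)

variable {M N : Type*} [AddCommGroup M] [Module R M] [AddCommGroup N] [Module R N]

theorem mem_solSubmodule {φ : PPFormula R n} {a : Fin n → M} :
    a ∈ φ.solSubmodule M ↔ ∃ b, Matrix.vecMulMap φ.B M b = Matrix.vecMulMap φ.A M a :=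
  Iff.rfl

theorem coe_solSubmodule (φ : PPFormula R n) :
    (φ.solSubmodule M : Set (Fin n → M)) = φ.sol M := by
  ext a
  simp only [SetLike.mem_coe, mem_solSubmodule, sol, Set.mem_ofPred_eq, funext_iff,
    Matrix.vecMulMap_apply]
  constructor
  · rintro ⟨b, hb⟩
    exact ⟨-b, fun j => by simp [hb j]⟩
  · rintro ⟨b, hb⟩
    refine ⟨-b, fun j => ?_⟩
    simpa [neg_eq_iff_eq_neg, eq_neg_iff_add_eq_zero, add_comm] using hb j

theorem mem_sol_iff {φ : PPFormula R n} {a : Fin n → M} :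
    a ∈ φ.sol M ↔ a ∈ φ.solSubmodule M := by
  rw [← SetLike.mem_coe, coe_solSubmodule]

theorem comp_mem_sol {φ : PPFormula R n} (f : M →ₗ[R] N) {a : Fin n → M}
    (ha : a ∈ φ.sol M) :
    f ∘ a ∈ φ.sol N := by
  rw [mem_sol_iff, mem_solSubmodule] at ha ⊢
  obtain ⟨b, hb⟩ := ha
  exact ⟨f ∘ b, by rw [Matrix.vecMulMap_comp, Matrix.vecMulMap_comp, hb]⟩

theorem exists_solSubmodule_eq {K J : Type*} [Fintype K] [Fintype J] (A : Fin n → J → R)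
    (B : K → J → R) :
    ∃ φ : PPFormula R n, ∀ (M : Type w) [AddCommGroup M] [Module R M],
      φ.solSubmodule M =
        (LinearMap.range (Matrix.vecMulMap B M)).comap (Matrix.vecMulMap A M) := by
  let eK := Fintype.equivFin K
  let eJ := Fintype.equivFin J
  refine ⟨⟨_, _, fun i j => A i (eJ.symm j), fun l j => B (eK.symm l) (eJ.symm j)⟩,
    fun M _ _ => ?_⟩
  ext a
  simp only [mem_solSubmodule, Submodule.mem_comap, LinearMap.mem_range, funext_iff,
    Matrix.vecMulMap_apply]
  constructor
  · rintro ⟨b, hb⟩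
    refine ⟨b ∘ eK, fun j => ?_⟩
    simpa [← eK.symm.sum_comp] using hb (eJ j)
  · rintro ⟨b, hb⟩
    refine ⟨b ∘ eK.symm, fun j => ?_⟩
    simp [← hb, ← eK.symm.sum_comp]

theorem exists_solSubmodule_eq_bot : ∃ φ : PPFormula R n,
    ∀ (M : Type w) [AddCommGroup M] [Module R M], φ.solSubmodule M = ⊥ := by
  refine ⟨⟨0, n, fun i => Pi.single i 1, finZeroElim⟩, fun M _ _ => ?_⟩
  ext a
  simp [mem_solSubmodule, funext_iff, Pi.single_apply, eq_comm]

theorem exists_solSubmodule_eq_sup (φ ψ : PPFormula R n) : ∃ χ : PPFormula R n,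
    ∀ (M : Type w) [AddCommGroup M] [Module R M],
      χ.solSubmodule M = φ.solSubmodule M ⊔ ψ.solSubmodule M := by
  -- unknowns `(y, b₁, b₂)` with `φ.A y = φ.B b₁` and `ψ.A (x - y) = ψ.B b₂`
  obtain ⟨χ, hχ⟩ := exists_solSubmodule_eq (K := Fin n ⊕ Fin φ.k ⊕ Fin ψ.k)
    (fun i => Sum.elim 0 (ψ.A i))
    (Sum.elim (fun i => Sum.elim (φ.A i) (ψ.A i))
      (Sum.elim (fun l => Sum.elim (-φ.B l) 0) (fun l => Sum.elim 0 (ψ.B l))))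
  refine ⟨χ, fun M _ _ => ?_⟩
  ext x
  rw [hχ, Submodule.mem_comap, LinearMap.mem_range, Submodule.mem_sup]
  simp only [mem_solSubmodule, funext_iff, Sum.forall, Matrix.vecMulMap_apply,
    Fintype.sum_sum_type, Sum.elim_inl, Sum.elim_inr, Pi.zero_apply, Pi.neg_apply, zero_smul,
    neg_smul, Finset.sum_const_zero, Finset.sum_neg_distrib, add_zero, zero_add, Pi.add_apply]
  constructor
  · rintro ⟨w, hφ, hψ⟩
    refine ⟨w ∘ Sum.inl,
      ⟨w ∘ Sum.inr ∘ Sum.inl, fun j => (add_neg_eq_zero.mp (hφ j)).symm⟩,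
      x - w ∘ Sum.inl, ⟨w ∘ Sum.inr ∘ Sum.inr, fun j => ?_⟩,
      fun i => add_sub_cancel _ _⟩
    simp [smul_sub, Finset.sum_sub_distrib, ← hψ j]
  · rintro ⟨y, ⟨b₁, hb₁⟩, z, ⟨b₂, hb₂⟩, hx⟩
    refine ⟨Sum.elim y (Sum.elim b₁ b₂), fun j => ?_, fun j => ?_⟩
    · simp [hb₁ j]
    · simp [hb₂ j, ← hx, smul_add, Finset.sum_add_distrib]

theorem exists_solSubmodule_eq_iSup {ι : Type*} (s : Finset ι) (φ : ι → PPFormula R n) :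
    ∃ χ : PPFormula R n, ∀ (M : Type w) [AddCommGroup M] [Module R M],
      χ.solSubmodule M = ⨆ i ∈ s, (φ i).solSubmodule M := by
  classical
  induction s using Finset.induction_on with
  | empty => simpa using exists_solSubmodule_eq_bot
  | insert i s _ ih =>
    obtain ⟨χ, hχ⟩ := ih
    obtain ⟨χ', hχ'⟩ := exists_solSubmodule_eq_sup (φ i) χ
    exact ⟨χ', fun M _ _ => by rw [hχ', hχ, Finset.iSup_insert]⟩

end PPFormula

theorem small_quotient_annihilator (R : Type u) [CommRing R] (M : Type v) [AddCommGroup M]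
    [Module R M] : Small.{v} (R ⧸ Module.annihilator R M) :=
  small_of_injective (RingHom.kerLift_injective (Module.toAddMonoidEnd R M))

theorem small_quotient_of_pi_le {R : Type u} [CommRing R] {ι : Type*} [Countable ι]
    {I : Ideal R} [Small.{v} (R ⧸ I)] {S : Submodule R (ι → R)}
    (hS : Submodule.pi Set.univ (fun _ => I) ≤ S) : Small.{v} ((ι → R) ⧸ S) := by
  let q : (ι → R) → ι → R ⧸ I := Pi.map fun _ => Ideal.Quotient.mk I
  have hq : Function.Surjective q :=
    Function.Surjective.piMap fun _ => Ideal.Quotient.mk_surjective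
  refine small_of_surjective (f := S.mkQ ∘ Function.surjInv hq) fun y => ?_
  obtain ⟨r, rfl⟩ := S.mkQ_surjective y
  refine ⟨q r, ?_⟩
  rw [Function.comp_apply, Submodule.mkQ_apply, Submodule.mkQ_apply, Submodule.Quotient.eq]
  refine hS fun i _ => Ideal.Quotient.eq.mp ?_
  exact congrFun (Function.surjInv_eq hq (q r)) i

theorem mem_range_vecMulMap_of_lTensor_mkQ_eq_zero {R : Type u} [CommRing R] {X : Type*}
    [AddCommGroup X] [Module R X] {I : Ideal R} (hI : I ≤ Module.annihilator R X) {k m : ℕ}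
    (B : Fin k → Fin m → R) {c : Fin m → X}
    (hc : LinearMap.lTensor X
      (LinearMap.range (Matrix.vecMulMap B R) ⊔ Submodule.pi Set.univ (fun _ => I)).mkQ
        ((TensorProduct.piScalarRight R R X (Fin m)).symm c) = 0) :
    c ∈ LinearMap.range (Matrix.vecMulMap B X) := by
  set S := LinearMap.range (Matrix.vecMulMap B R) ⊔ Submodule.pi Set.univ (fun _ => I)
  have hS : ∀ t : X ⊗[R] S, TensorProduct.piScalarRight R R X (Fin m)
      (LinearMap.lTensor X S.subtype t) ∈ LinearMap.range (Matrix.vecMulMap B X) := by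
    intro t
    induction t using TensorProduct.induction_on with
    | zero => simp
    | tmul x s =>
      obtain ⟨s, hs⟩ := s
      obtain ⟨_, ⟨u, rfl⟩, r, hr, rfl⟩ := Submodule.mem_sup.mp hs
      have hrx : ∀ j, r j • x = 0 := fun j =>
        Module.mem_annihilator.mp (hI (hr j (Set.mem_univ j))) x
      refine ⟨fun l => u l • x, funext fun j => ?_⟩
      simp [hrx, add_smul, Finset.sum_smul, mul_smul]
    | add t t' ht ht' => simpa only [map_add] using add_mem ht ht'
  rw [← LinearMap.mem_ker, _root_.lTensor_mkQ] at hc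
  obtain ⟨t, ht⟩ := hc
  simpa [ht] using hS t

section Purity

variable {R : Type u} [CommRing R] {M : Type v} [AddCommGroup M] [Module R M]
  {N : Submodule R M}

theorem IsPureSubmodule.rTensor_injective (hN : IsPureSubmodule R M N) (L : Type*)
    [AddCommGroup L] [Module R L] [Small.{v} L] :
    Function.Injective (LinearMap.rTensor L N.subtype) := by
  let e : Shrink.{v} L ≃ₗ[R] L := Shrink.linearEquiv R L
  have hcomm : ∀ t, e.lTensor M (LinearMap.rTensor _ N.subtype t) =
      LinearMap.rTensor L N.subtype (e.lTensor N t) := fun t => by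
    induction t using TensorProduct.induction_on with
    | zero => simp
    | tmul x l => simp
    | add t t' ht ht' => simp only [map_add, ht, ht']
  intro x y hxy
  obtain ⟨x, rfl⟩ := (e.lTensor N).surjective x
  obtain ⟨y, rfl⟩ := (e.lTensor N).surjective y
  rw [← hcomm, ← hcomm] at hxy
  rw [hN _ ((e.lTensor M).injective hxy)]

theorem IsPureSubmodule.mem_range_vecMulMap (hN : IsPureSubmodule R M N) {k m : ℕ}
    (B : Fin k → Fin m → R) {c : Fin m → N}
    (hc : N.subtype ∘ c ∈ LinearMap.range (Matrix.vecMulMap B M)) :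
    c ∈ LinearMap.range (Matrix.vecMulMap B N) := by
  -- Purity only tests modules in `Type v`, so `coker B` is cut down by `ann M`, which kills
  -- `N` anyway: the result is a module over `R ⧸ ann M ↪ End M`, hence `v`-small.
  set I := Module.annihilator R M
  set S := LinearMap.range (Matrix.vecMulMap B R) ⊔ Submodule.pi Set.univ (fun _ => I)
  have : Small.{v} (R ⧸ I) := small_quotient_annihilator R M
  have : Small.{v} ((Fin m → R) ⧸ S) := small_quotient_of_pi_le le_sup_right
  refine mem_range_vecMulMap_of_lTensor_mkQ_eq_zero
    (N.subtype.annihilator_le_of_injective N.injective_subtype) B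
    (hN.rTensor_injective _ ?_)
  obtain ⟨b, hb⟩ := hc
  have hB : S.mkQ ∘ₗ Matrix.vecMulMap B R = 0 := by
    refine LinearMap.ext fun u => ?_
    simpa using Submodule.mem_sup_left (LinearMap.mem_range_self _ u)
  calc LinearMap.rTensor _ N.subtype (LinearMap.lTensor N S.mkQ
        ((TensorProduct.piScalarRight R R N (Fin m)).symm c))
      = LinearMap.lTensor M S.mkQ (LinearMap.rTensor _ N.subtype
          ((TensorProduct.piScalarRight R R N (Fin m)).symm c)) := by
        rw [← LinearMap.comp_apply, LinearMap.rTensor_comp_lTensor,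
          ← LinearMap.lTensor_comp_rTensor, LinearMap.comp_apply]
    _ = LinearMap.lTensor M S.mkQ (LinearMap.lTensor M (Matrix.vecMulMap B R)
          ((TensorProduct.piScalarRight R R M (Fin k)).symm b)) := by
        congr 1
        apply (TensorProduct.piScalarRight R R M (Fin m)).injective
        rw [TensorProduct.piScalarRight_rTensor, Matrix.piScalarRight_lTensor_vecMulMap]
        simp [hb]
    _ = LinearMap.rTensor _ N.subtype 0 := by
        rw [← LinearMap.comp_apply, ← LinearMap.lTensor_comp, hB]
        simp

theorem IsPureSubmodule.comp_mem_sol_iff (hN : IsPureSubmodule R M N) {n : ℕ}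
    (φ : PPFormula R n) (a : Fin n → N) : N.subtype ∘ a ∈ φ.sol M ↔ a ∈ φ.sol N := by
  refine ⟨fun h => ?_, PPFormula.comp_mem_sol N.subtype⟩
  rw [PPFormula.mem_sol_iff, PPFormula.mem_solSubmodule, Matrix.vecMulMap_comp] at h
  exact PPFormula.mem_sol_iff.mpr (hN.mem_range_vecMulMap φ.B h)

end Purity

section Atomic

variable {R : Type u} [CommRing R] {D : (M : Type v) → [AddCommGroup M] → [Module R M] → Prop}
  {M N : Type v} [AddCommGroup M] [Module R M] [AddCommGroup N] [Module R N] {n : ℕ}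

theorem dGenerates_congr {φ : PPFormula R n} {a : Fin n → M} {b : Fin n → N}
    (h : ∀ ψ : PPFormula R n, a ∈ ψ.sol M ↔ b ∈ ψ.sol N) :
    DGenerates R D φ M a ↔ DGenerates R D φ N b := by
  simp only [DGenerates, h]

theorem IsStrictlyDAtomic.of_exists (hM : D M)
    (h : ∀ (n : ℕ) (a : Fin n → M), ∃ φ : PPFormula R n, DGenerates R D φ M a ∧
      ∀ (N : Type v) [AddCommGroup N] [Module R N], D N →
        ∀ b ∈ φ.sol N, ∃ f : M →ₗ[R] N, ∀ i, f (a i) = b i) :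
    IsStrictlyDAtomic R D M := by
  refine ⟨⟨hM, fun n a => (h n a).imp fun _ => And.left⟩,
    fun n a ψ hψ N _ _ hN b hb => ?_⟩
  obtain ⟨φ, hφ, hlift⟩ := h n a
  exact hlift N hN b (hψ.2 φ hφ.1 N hN hb)

theorem IsStrictlyDAtomic.of_isPureSubmodule {N : Submodule R M} (hM : IsStrictlyDAtomic R D M)
    (hN : IsPureSubmodule R M N) (hDN : D N) : IsStrictlyDAtomic R D N := by
  refine .of_exists hDN fun n a => ?_
  obtain ⟨φ, hφ⟩ := hM.1.2 n (N.subtype ∘ a)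
  refine ⟨φ, (dGenerates_congr (hN.comp_mem_sol_iff · a)).mp hφ, fun P _ _ hP b hb => ?_⟩
  obtain ⟨f, hf⟩ := hM.2 n _ φ hφ P hP b hb
  exact ⟨f ∘ₗ N.subtype, hf⟩

end Atomic

theorem isPureSubmodule_range_of_rTensor_injective {R : Type u} [CommRing R]
    {M N : Type v} [AddCommGroup M] [Module R M] [AddCommGroup N] [Module R N] (f : N →ₗ[R] M)
    (hf : ∀ (L : Type v) [AddCommGroup L] [Module R L], Function.Injective (f.rTensor L)) :
    IsPureSubmodule R M (LinearMap.range f) := fun L _ _ => by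
  refine Function.Injective.of_comp_right (g := f.rangeRestrict.rTensor L) ?_
    (LinearMap.rTensor_surjective L f.surjective_rangeRestrict)
  rw [← LinearMap.coe_comp, ← LinearMap.rTensor_comp, LinearMap.subtype_comp_codRestrict]
  exact hf L

theorem DirectSum.rTensor_coeFnLinearMap_injective {R : Type u} [CommSemiring R] {ι : Type*}
    {M : ι → Type*} [∀ i, AddCommMonoid (M i)] [∀ i, Module R (M i)] (L : Type*)
    [AddCommMonoid L] [Module R L] :
    Function.Injective ((DirectSum.coeFnLinearMap R (M := M)).rTensor L) := by
  classical
  have hcomponent : ∀ w i, TensorProduct.directSumLeft R R M L w i =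
      (LinearMap.proj i).rTensor L ((DirectSum.coeFnLinearMap R).rTensor L w) := by
    intro w i
    induction w using TensorProduct.induction_on with
    | zero => simp
    | tmul x l => simp [TensorProduct.directSumLeft_tmul]
    | add w w' hw hw' => simp only [map_add, DirectSum.add_apply, hw, hw']
  intro w w' h
  apply (TensorProduct.directSumLeft R R M L).injective
  exact DFinsupp.ext fun i => by rw [hcomponent, hcomponent, h]

theorem IsDefinableClass.directSum {R : Type u} [CommRing R]
    {D : (M : Type v) → [AddCommGroup M] → [Module R M] → Prop} (hD : IsDefinableClass R D)
    {ι : Type v} {M : ι → Type v} [∀ i, AddCommGroup (M i)] [∀ i, Module R (M i)]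
    (hM : ∀ i, D (M i)) : D (⨁ i, M i) := by
  obtain ⟨hIso, hProd, -, hPure⟩ := hD
  let f := DirectSum.coeFnLinearMap R (M := M)
  have hf : Function.Injective f := DFunLike.coe_injective
  exact hIso _ _ (LinearEquiv.ofInjective f hf).symm <| hPure _ _
    (isPureSubmodule_range_of_rTensor_injective f
      fun L _ _ => DirectSum.rTensor_coeFnLinearMap_injective L)
    (hProd ι M hM)

theorem DirectSum.sum_lof_eq_self {R : Type u} [Semiring R] {ι : Type*} [DecidableEq ι]
    {M : ι → Type*} [∀ i, AddCommMonoid (M i)] [∀ i, Module R (M i)] (x : ⨁ i, M i)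
    {s : Finset ι} (hs : ∀ i ∉ s, x i = 0) :
    ∑ i ∈ s, DirectSum.lof R ι M i (x i) = x := by
  classical
  calc ∑ i ∈ s, DirectSum.lof R ι M i (x i) = ∑ i ∈ x.support, DirectSum.of M i (x i) :=
        (Finset.sum_subset
          (fun i hi => by_contra fun his => DFinsupp.mem_support_iff.mp hi (hs i his))
          fun i _ hi => by simp [DFinsupp.notMem_support_iff.mp hi]).symm
    _ = x := DirectSum.sum_support_of x

theorem IsStrictlyDAtomic.directSum {R : Type u} [CommRing R]
    {D : (M : Type v) → [AddCommGroup M] → [Module R M] → Prop} {ι : Type v}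
    {M : ι → Type v} [∀ i, AddCommGroup (M i)] [∀ i, Module R (M i)]
    (hM : ∀ i, IsStrictlyDAtomic R D (M i))
    (hsum : D (⨁ i, M i)) : IsStrictlyDAtomic R D (⨁ i, M i) := by
  classical
  refine .of_exists hsum fun n c => ?_
  choose φ hφ using fun i => (hM i).1.2 n (fun j => c j i)
  let s := Finset.univ.biUnion fun j => (c j).support
  have hc : ∀ j, ∑ i ∈ s, DirectSum.lof R ι M i (c j i) = c j := fun j =>
    DirectSum.sum_lof_eq_self _ fun i hi => by_contra fun hne => hi <|
      Finset.mem_biUnion.mpr ⟨j, Finset.mem_univ j, DFinsupp.mem_support_iff.mpr hne⟩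
  obtain ⟨χ, hχ⟩ := PPFormula.exists_solSubmodule_eq_iSup s φ
  refine ⟨χ, ⟨?_, fun ψ hψ N _ _ hN => ?_⟩, fun N _ _ hN b hb => ?_⟩
  · rw [PPFormula.mem_sol_iff, hχ, Submodule.mem_iSup_finset_iff_exists_sum]
    refine ⟨fun i => ⟨DirectSum.lof R ι M i ∘ fun j => c j i,
      PPFormula.mem_sol_iff.mp (PPFormula.comp_mem_sol _ (hφ i).1)⟩, funext fun j => ?_⟩
    simp [Finset.sum_apply, hc]
  · rw [← PPFormula.coe_solSubmodule, ← PPFormula.coe_solSubmodule, hχ,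
      SetLike.coe_subset_coe]
    refine iSup₂_le fun i _ => ?_
    rw [← SetLike.coe_subset_coe, PPFormula.coe_solSubmodule, PPFormula.coe_solSubmodule]
    exact (hφ i).2 ψ (PPFormula.comp_mem_sol (DirectSum.component R ι M i) hψ) N hN
  · rw [PPFormula.mem_sol_iff, hχ, Submodule.mem_iSup_finset_iff_exists_sum] at hb
    obtain ⟨μ, hμ⟩ := hb
    choose g hg using fun i =>
      (hM i).2 n _ (φ i) (hφ i) N hN (μ i) (PPFormula.mem_sol_iff.mpr (μ i).2)
    refine ⟨DirectSum.toModule R ι N g, fun j => ?_⟩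
    rw [← hc j, map_sum, ← hμ]
    simp [hg, Finset.sum_apply]

theorem strictlyDAtomic_pure_submodule_and_directSum (R : Type u) [CommRing R]
    (D : (M : Type v) → [AddCommGroup M] → [Module R M] → Prop)
    (hD : IsDefinableClass R D) :
    (∀ (M : Type v) [AddCommGroup M] [Module R M] (N : Submodule R M),
        IsPureSubmodule R M N → IsStrictlyDAtomic R D M → IsStrictlyDAtomic R D N) ∧
    (∀ (ι : Type v) [DecidableEq ι] (M : ι → Type v)
        [∀ i, AddCommGroup (M i)] [∀ i, Module R (M i)],
        (∀ i, IsStrictlyDAtomic R D (M i)) → IsStrictlyDAtomic R D (⨁ i, M i)) :=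
  ⟨fun M _ _ N hN hM => hM.of_isPureSubmodule hN (hD.2.2.2 M N hN hM.1.1),
    fun _ _ _ _ _ hM => .directSum hM (hD.directSum fun i => (hM i).1.1)⟩
end

section
/- Let 𝒟 be a definable subcategory of Mod-R in which every object admits a pure epimorphism from a strictly 𝒟-atomic object. Then M ∈ 𝒟 is strictly 𝒟-atomic if and only if M is locally 𝒟-pure-projective, i.e. every pure epimorphism D → M with D ∈ 𝒟 locally splits (for each finite tuple ā from M there is g : M → D with p(g(ā)) = ā). -/
open TensorProduct DirectSum

universe u v

-- homomorphisms preserve pp solutions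
lemma sol_map {R : Type u} [CommRing R] {M N : Type v} [AddCommGroup M] [Module R M]
    [AddCommGroup N] [Module R N] (f : M →ₗ[R] N) {n : ℕ} (φ : PPFormula R n)
    {a : Fin n → M} (ha : a ∈ φ.sol M) : (fun i => f (a i)) ∈ φ.sol N := by
  obtain ⟨b, hb⟩ := ha
  refine ⟨fun l => f (b l), fun j => ?_⟩
  have h := congrArg f (hb j)
  simpa [map_add, map_sum, map_smul] using h

noncomputable def evalMap (R : Type u) [CommRing R] (K : Type v) [AddCommGroup K] [Module R K] :
    K →ₗ[R] CharacterModule (CharacterModule K) where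
  toFun k := { toFun := fun c => c k, map_zero' := rfl, map_add' := fun _ _ => rfl }
  map_add' x y := by ext c; exact map_add c x y
  map_smul' r x := by ext c; rfl

noncomputable def evalAt {K : Type v} [AddCommGroup K] (k : K) :
    CharacterModule K →+ AddCircle (1 : ℚ) where
  toFun c := c k
  map_zero' := rfl
  map_add' _ _ := rfl

theorem pure_solve {R : Type u} [CommRing R] {N : Type v} [AddCommGroup N] [Module R N]
    {K : Submodule R N}
    (hK : ∀ (L : Type v) [AddCommGroup L] [Module R L],
      Function.Injective (LinearMap.rTensor L K.subtype))
    {s m : ℕ} (r : Fin s → Fin m → R) (d : Fin m → K)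
    (v : Fin s → N) (hv : ∀ j, ∑ i, r i j • v i = (d j : N)) :
    ∃ w : Fin s → K, ∀ j, ∑ i, r i j • w i = d j := by
  by_contra hcon
  push_neg at hcon
  set T : (Fin s → K) →ₗ[R] (Fin m → K) :=
    { toFun := fun x j => ∑ i, r i j • x i
      map_add' := fun x y => by funext j; simp [smul_add, Finset.sum_add_distrib]
      map_smul' := fun t x => by
        funext j; simp [Finset.smul_sum, smul_comm t] } with hT
  have hd : d ∉ LinearMap.range T := by
    rintro ⟨w, hw⟩
    obtain ⟨j, hj⟩ := hcon w
    exact hj (congrFun hw j)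
  have hne : Submodule.Quotient.mk (p := LinearMap.range T) d ≠ 0 := by
    simpa [Submodule.Quotient.mk_eq_zero] using hd
  obtain ⟨c, hc⟩ := CharacterModule.exists_character_apply_ne_zero_of_ne_zero hne
  set χ : Fin m → CharacterModule ↥K := fun j =>
    (c.comp (LinearMap.range T).mkQ.toAddMonoidHom).comp
      (AddMonoidHom.single (fun _ : Fin m => ↥K) j) with hχ
  have hχsum : ∀ i, ∑ j, r i j • χ j = 0 := by
    intro i
    ext k
    have h1 : (∑ j, r i j • χ j) k = ∑ j, (r i j • χ j) k := map_sum (evalAt k) _ _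
    have h2 : ∀ j, (r i j • χ j) k
        = c ((LinearMap.range T).mkQ (Pi.single j (r i j • k))) := fun j => rfl
    have h3 : (∑ j, Pi.single j (r i j • k) : Fin m → K) = T (Pi.single i k) := by
      rw [Finset.univ_sum_single (fun j => r i j • k)]
      funext j
      simp [hT, Pi.single_apply]
    have h4 : c ((LinearMap.range T).mkQ (T (Pi.single i k))) = 0 := by
      rw [Submodule.mkQ_apply, (Submodule.Quotient.mk_eq_zero _).mpr
        (LinearMap.mem_range_self T _), map_zero]
    rw [h1]
    simp_rw [h2]
    rw [← map_sum, ← map_sum, h3, h4]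
    rfl
  obtain ⟨E, hE⟩ := rTensor_injective_iff_lcomp_surjective.mp
    (hK (CharacterModule ↥K)) (evalMap R ↥K)
  have hEK : ∀ (k : K) (ch : CharacterModule ↥K), E (k : N) ch = ch k := by
    intro k ch
    exact DFunLike.congr_fun (DFunLike.congr_fun hE k) ch
  apply hc
  have hmk : c (Submodule.Quotient.mk d) = ∑ j, χ j (d j) := by
    have hdec : (d : Fin m → K) = ∑ j, Pi.single j (d j) :=
      (Finset.univ_sum_single d).symm
    rw [← Submodule.mkQ_apply]
    rw [show ((LinearMap.range T).mkQ d) = (LinearMap.range T).mkQ (∑ j, Pi.single j (d j)) from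
      congrArg _ hdec]
    rw [map_sum, map_sum]
    rfl
  rw [hmk]
  have step1 : ∀ j, χ j (d j) = E ((d j : N)) (χ j) := fun j => (hEK (d j) (χ j)).symm
  simp_rw [step1]
  have step2 : ∀ j, E ((d j : N)) (χ j) = ∑ i, E (v i) (r i j • χ j) := by
    intro j
    have h1 : E ((d j : N)) (χ j) = evalAt (χ j) (E (∑ i, r i j • v i)) := by rw [hv j]; rfl
    rw [h1, map_sum E, map_sum (evalAt (χ j))]
    refine Finset.sum_congr rfl fun i _ => ?_
    show E (r i j • v i) (χ j) = E (v i) (r i j • χ j)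
    rw [map_smul]
    rfl
  simp_rw [step2]
  rw [Finset.sum_comm]
  have step3 : ∀ i, ∑ j, E (v i) (r i j • χ j) = E (v i) (∑ j, r i j • χ j) :=
    fun i => (map_sum (E (v i)) _ _).symm
  simp_rw [step3, hχsum]
  simp

lemma ppLift {R : Type u} [CommRing R] {N M : Type v} [AddCommGroup N] [Module R N]
    [AddCommGroup M] [Module R M] {p : N →ₗ[R] M} (hp : IsPureEpi R p)
    {n : ℕ} (φ : PPFormula R n) {a : Fin n → M} (ha : a ∈ φ.sol M) :
    ∃ b : Fin n → N, b ∈ φ.sol N ∧ ∀ i, p (b i) = a i := by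
  obtain ⟨cM, hc⟩ := ha
  choose a' ha' using fun i => hp.1 (a i)
  choose c' hc' using fun l => hp.1 (cM l)
  set r : Fin (n + φ.k) → Fin φ.m → R := Fin.append φ.A φ.B with hr
  have split : ∀ (j : Fin φ.m) (g : Fin (n + φ.k) → N),
      ∑ i, r i j • g i = (∑ i, φ.A i j • g (Fin.castAdd φ.k i))
        + (∑ l, φ.B l j • g (Fin.natAdd n l)) := by
    intro j g
    rw [Fin.sum_univ_add]
    congr 1
    · exact Finset.sum_congr rfl fun i _ => by rw [hr, Fin.append_left]
    · exact Finset.sum_congr rfl fun l _ => by rw [hr, Fin.append_right]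
  set v : Fin (n + φ.k) → N := Fin.append a' c' with hv
  have hva : ∀ i, v (Fin.castAdd φ.k i) = a' i := fun i => by rw [hv, Fin.append_left]
  have hvc : ∀ l, v (Fin.natAdd n l) = c' l := fun l => by rw [hv, Fin.append_right]
  have hker : ∀ j, (∑ i, r i j • v i) ∈ LinearMap.ker p := by
    intro j
    rw [LinearMap.mem_ker, split j v]
    have h1 : p ((∑ i, φ.A i j • v (Fin.castAdd φ.k i)) + (∑ l, φ.B l j • v (Fin.natAdd n l)))
        = (∑ i, φ.A i j • a i) + (∑ l, φ.B l j • cM l) := by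
      simp [map_add, map_sum, map_smul, hva, hvc, ha', hc']
    rw [h1, hc j]
  obtain ⟨w, hw⟩ := pure_solve hp.2 r (fun j => ⟨_, hker j⟩) v (fun _ => rfl)
  have hwN : ∀ j, ∑ i, r i j • (w i : N) = ∑ i, r i j • v i := by
    intro j
    have h := congrArg ((LinearMap.ker p).subtype) (hw j)
    simpa [map_sum, map_smul] using h
  have hwker : ∀ i, p ((w i : N)) = 0 := fun i => (w i).2
  refine ⟨fun i => a' i - (w (Fin.castAdd φ.k i) : N),
    ⟨fun l => c' l - (w (Fin.natAdd n l) : N), fun j => ?_⟩, fun i => ?_⟩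
  · have expand :
        (∑ i, φ.A i j • (a' i - (w (Fin.castAdd φ.k i) : N)))
          + (∑ l, φ.B l j • (c' l - (w (Fin.natAdd n l) : N)))
          = ((∑ i, φ.A i j • v (Fin.castAdd φ.k i)) + (∑ l, φ.B l j • v (Fin.natAdd n l)))
            - ((∑ i, φ.A i j • (w (Fin.castAdd φ.k i) : N))
              + (∑ l, φ.B l j • (w (Fin.natAdd n l) : N))) := by
      simp only [smul_sub, Finset.sum_sub_distrib, hva, hvc]
      abel
    rw [expand, ← split j v, ← split j (fun i => (w i : N)), hwN j, sub_self]
  · simp [map_sub, ha', hwker]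

lemma transfer_gen {R : Type u} [CommRing R]
    (D : (M : Type v) → [AddCommGroup M] → [Module R M] → Prop)
    {M N : Type v} [AddCommGroup M] [Module R M] [AddCommGroup N] [Module R N]
    (g : M →ₗ[R] N) (p : N →ₗ[R] M) {n : ℕ} {a : Fin n → M}
    (hpg : ∀ i, p (g (a i)) = a i) {φ : PPFormula R n}
    (hφ : DGenerates R D φ N (fun i => g (a i))) : DGenerates R D φ M a := by
  constructor
  · have h := sol_map p φ hφ.1
    simpa [hpg] using h
  · intro ψ hψ N' _ _ hN'
    exact hφ.2 ψ (sol_map g ψ hψ) N' hN'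


/-!
STATEMENT 15: Suppose every object of the definable class `𝒟` admits a pure epimorphism
from a strictly `𝒟`-atomic object. Then `M ∈ 𝒟` is strictly `𝒟`-atomic iff `M` is
locally `𝒟`-pure-projective (every pure epimorphism in `𝒟` onto `M` locally splits).
-/
theorem strictlyDAtomic_iff_locally_pureProjective (R : Type u) [CommRing R]
    (D : (M : Type v) → [AddCommGroup M] → [Module R M] → Prop)
    (hD : IsDefinableClass R D)
    (hgen : ∀ (D₀ : Type v) [AddCommGroup D₀] [Module R D₀], D D₀ →
      ∃ (N : Type v) (ag : AddCommGroup N),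
        haveI := ag
        ∃ (mg : Module R N),
          haveI := mg
          IsStrictlyDAtomic R D N ∧ ∃ p : N →ₗ[R] D₀, IsPureEpi R p)
    (M : Type v) [AddCommGroup M] [Module R M] (hM : D M) :
    IsStrictlyDAtomic R D M ↔
      (∀ (N : Type v) [AddCommGroup N] [Module R N], D N →
        ∀ p : N →ₗ[R] M, IsPureEpi R p →
          ∀ (n : ℕ) (a : Fin n → M), ∃ g : M →ₗ[R] N, ∀ i, p (g (a i)) = a i) := by
  constructor
  · intro hSA N _ _ hN p hp n a
    obtain ⟨φ, hφ⟩ := hSA.1.2 n a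
    obtain ⟨b, hb, hpb⟩ := ppLift hp φ hφ.1
    obtain ⟨g, hg⟩ := hSA.2 n a φ hφ N hN b hb
    exact ⟨g, fun i => by rw [hg i, hpb i]⟩
  · intro hloc
    obtain ⟨N, ag, mg, hNSA, p, hp⟩ := hgen M hM
    have key : ∀ (n : ℕ) (a : Fin n → M), ∃ (g : M →ₗ[R] N) (φ : PPFormula R n),
        (∀ i, p (g (a i)) = a i) ∧ DGenerates R D φ N (fun i => g (a i)) := by
      intro n a
      obtain ⟨g, hg⟩ := hloc N hNSA.1.1 p hp n a
      obtain ⟨φ, hφ⟩ := hNSA.1.2 n (fun i => g (a i))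
      exact ⟨g, φ, hg, hφ⟩
    constructor
    · refine ⟨hM, fun n a => ?_⟩
      obtain ⟨g, φ, hg, hφ⟩ := key n a
      exact ⟨φ, transfer_gen D g p hg hφ⟩
    · intro n a φ hφ N' _ _ hN' b hb
      obtain ⟨g, φ', hg, hφ'⟩ := key n a
      -- a satisfies φ' in M
      have haφ' : a ∈ φ'.sol M := by
        have h := sol_map p φ' hφ'.1
        simpa [hg] using h
      -- hence φ implies φ' on D, so b ∈ φ'.sol N'
      have hb' : b ∈ φ'.sol N' := hφ.2 φ' haφ' N' hN' hb
      obtain ⟨h, hh⟩ := hNSA.2 n (fun i => g (a i)) φ' hφ' N' hN' b hb'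
      exact ⟨h.comp g, fun i => by simp [LinearMap.comp_apply]; exact hh i⟩
end

section
/- Suppose A is a finitely presented R-module, ā a tuple from A whose pp-type in A is generated by the pp formula φ, and f : A → D is a 𝒟-preenvelope of A with D ∈ 𝒟. Then the pp-type of f(ā) in D is generated, modulo the theory of 𝒟, by φ. -/
open TensorProduct DirectSum

universe u v

/-- `f : A → D₀` is a `𝒟`-preenvelope of `A`. -/
def IsDPreenvelope (R : Type u) [CommRing R]
    (D : (M : Type v) → [AddCommGroup M] → [Module R M] → Prop)
    (A : Type v) [AddCommGroup A] [Module R A]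
    (D₀ : Type v) [AddCommGroup D₀] [Module R D₀] (f : A →ₗ[R] D₀) : Prop :=
  D D₀ ∧ ∀ (D' : Type v) [AddCommGroup D'] [Module R D'], D D' →
    ∀ g : A →ₗ[R] D', ∃ h : D₀ →ₗ[R] D', h.comp f = g

/-!
A finitely presented module `A = Rᵐ / ⟨r₁, …, r_K⟩` with `āᵢ = π(αᵢ)` is described by the pp
formula `θ(x̄) := ∃ ȳ, x̄ = α ȳ ∧ r ȳ = 0`: `ā` satisfies it, and any solution of it in `N` is the
image of `ā` under a map `A → N`. If `φ` generates the pp-type of `ā`, then `φ ≤ θ` everywhere, so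
every `b̄ ∈ φ(N)` is an image of `ā`. Taking `N ∈ 𝒟` and factoring that map through the
preenvelope `f` shows that `b̄` satisfies every pp formula satisfied by `f ā`.
-/

theorem LinearMap.exists_comp_eq_of_surjective_of_ker_le {R P A N : Type*} [Ring R]
    [AddCommGroup P] [Module R P] [AddCommGroup A] [Module R A] [AddCommGroup N] [Module R N]
    {π : P →ₗ[R] A} (hπ : Function.Surjective π) {g : P →ₗ[R] N} (hker : ker π ≤ ker g) :
    ∃ h : A →ₗ[R] N, h ∘ₗ π = g :=
  ⟨(ker π).liftQ g hker ∘ₗ (π.quotKerEquivOfSurjective hπ).symm.toLinearMap, by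
    ext u
    simp [LinearMap.quotKerEquivOfSurjective_symm_apply]⟩

namespace PPFormula

variable {R : Type u} [Ring R] {n : ℕ}

theorem map_mem_sol (ψ : PPFormula R n) {M N : Type*} [AddCommGroup M] [Module R M]
    [AddCommGroup N] [Module R N] (g : M →ₗ[R] N) {a : Fin n → M} (ha : a ∈ ψ.sol M) :
    g ∘ a ∈ ψ.sol N := by
  obtain ⟨b, hb⟩ := ha
  refine ⟨g ∘ b, fun j => ?_⟩
  simpa only [map_add, map_sum, map_smul, map_zero, Function.comp_apply] using congrArg g (hb j)

variable {m K : ℕ}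

/-- The formula `∃ ȳ, (∀ i, xᵢ = ∑ₜ αᵢₜ yₜ) ∧ ∀ l, ∑ₜ rₗₜ yₜ = 0`. -/
def ofPresentation (α : Fin n → Fin m → R) (r : Fin K → Fin m → R) : PPFormula R n where
  k := m
  m := n + K
  A i := Fin.addCases (fun i' => if i = i' then 1 else 0) (fun _ => 0)
  B t := Fin.addCases (fun i' => -α i' t) (fun l => r l t)

theorem mem_sol_ofPresentation_iff {α : Fin n → Fin m → R} {r : Fin K → Fin m → R}
    {M : Type*} [AddCommGroup M] [Module R M] {x : Fin n → M} :
    x ∈ (ofPresentation α r).sol M ↔ ∃ y : Fin m → M,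
      (∀ i, x i = Fintype.linearCombination R y (α i)) ∧
        ∀ l, Fintype.linearCombination R y (r l) = 0 := by
  simp only [sol, Fin.forall_fin_add, ofPresentation, Fin.addCases_left, Fin.addCases_right,
    Fintype.linearCombination_apply, ite_smul, one_smul, zero_smul, Finset.sum_ite_eq',
    Finset.mem_univ, if_true, Finset.sum_const_zero, zero_add, neg_smul, Finset.sum_neg_distrib,
    add_neg_eq_zero, Set.mem_ofPred_eq]
  rfl

theorem mem_sol_ofPresentation_self {α : Fin n → Fin m → R} {r : Fin K → Fin m → R}
    {A : Type*} [AddCommGroup A] [Module R A] (π : (Fin m → R) →ₗ[R] A) {a : Fin n → A}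
    (hα : ∀ i, π (α i) = a i) (hr : ∀ l, π (r l) = 0) :
    a ∈ (ofPresentation α r).sol A := by
  have hπ : Fintype.linearCombination R (fun t => π (Pi.single t 1)) = π := by
    ext
    simp
  refine mem_sol_ofPresentation_iff.mpr ⟨fun t => π (Pi.single t 1), ?_, ?_⟩ <;> rw [hπ]
  exacts [fun i => (hα i).symm, hr]

theorem exists_linearMap_of_mem_sol_ofPresentation {α : Fin n → Fin m → R}
    {r : Fin K → Fin m → R} {A N : Type*} [AddCommGroup A] [Module R A]
    [AddCommGroup N] [Module R N] {π : (Fin m → R) →ₗ[R] A} (hπ : Function.Surjective π)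
    (hker : Submodule.span R (Set.range r) = LinearMap.ker π) {a : Fin n → A}
    (hα : ∀ i, π (α i) = a i) {b : Fin n → N} (hb : b ∈ (ofPresentation α r).sol N) :
    ∃ g : A →ₗ[R] N, ∀ i, g (a i) = b i := by
  obtain ⟨y, hyα, hyr⟩ := mem_sol_ofPresentation_iff.mp hb
  have hle : LinearMap.ker π ≤ LinearMap.ker (Fintype.linearCombination R y) := by
    rw [← hker, Submodule.span_le]
    rintro _ ⟨l, rfl⟩
    exact hyr l
  obtain ⟨g, hg⟩ := LinearMap.exists_comp_eq_of_surjective_of_ker_le hπ hle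
  exact ⟨g, fun i => by rw [← hα i, ← LinearMap.comp_apply, hg, ← hyα]⟩

theorem exists_linearMap_of_forall_sol_subset {A : Type v} [AddCommGroup A] [Module R A]
    [Module.FinitePresentation R A] {a : Fin n → A} {φ : PPFormula R n}
    (hgen : ∀ ψ : PPFormula R n, a ∈ ψ.sol A →
      ∀ (N : Type v) [AddCommGroup N] [Module R N], φ.sol N ⊆ ψ.sol N)
    {N : Type v} [AddCommGroup N] [Module R N] {b : Fin n → N} (hb : b ∈ φ.sol N) :
    ∃ g : A →ₗ[R] N, ∀ i, g (a i) = b i := by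
  obtain ⟨m, π, hπ⟩ := Module.Finite.exists_fin' R A
  obtain ⟨K, r, hr⟩ :=
    Submodule.fg_iff_exists_fin_generating_family.mp (Module.FinitePresentation.fg_ker π hπ)
  choose α hα using fun i => hπ (a i)
  have hπr : ∀ l, π (r l) = 0 := fun l =>
    LinearMap.mem_ker.mp (hr ▸ Submodule.subset_span (Set.mem_range_self l))
  exact exists_linearMap_of_mem_sol_ofPresentation hπ hr hα
    (hgen _ (mem_sol_ofPresentation_self π hα hπr) N hb)

end PPFormula

theorem ppType_of_preenvelope_generated_general (R : Type u) [CommRing R]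
    (D : (M : Type v) → [AddCommGroup M] → [Module R M] → Prop)
    (A : Type v) [AddCommGroup A] [Module R A] (hA : Module.FinitePresentation R A)
    (n : ℕ) (a : Fin n → A) (φ : PPFormula R n)
    (hφ : a ∈ φ.sol A)
    (hgen : ∀ ψ : PPFormula R n, a ∈ ψ.sol A →
      ∀ (N : Type v) [AddCommGroup N] [Module R N], φ.sol N ⊆ ψ.sol N)
    (D₀ : Type v) [AddCommGroup D₀] [Module R D₀] (f : A →ₗ[R] D₀)
    (hf : IsDPreenvelope R D A D₀ f) :
    DGenerates R D φ D₀ (fun i => f (a i)) := by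
  refine ⟨φ.map_mem_sol f hφ, fun ψ hψ N _ _ hN b hb => ?_⟩
  obtain ⟨g, hg⟩ := PPFormula.exists_linearMap_of_forall_sol_subset hgen hb
  obtain ⟨h, hhf⟩ := hf.2 N hN g
  have hb_eq : h ∘ (fun i => f (a i)) = b := funext fun i => by
    rw [← hg i, ← hhf]
    rfl
  exact hb_eq ▸ ψ.map_mem_sol h hψ

theorem ppType_of_preenvelope_generated (R : Type u) [CommRing R]
    (D : (M : Type v) → [AddCommGroup M] → [Module R M] → Prop)
    (hD : IsDefinableClass R D)
    (A : Type v) [AddCommGroup A] [Module R A] (hA : Module.FinitePresentation R A)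
    (n : ℕ) (a : Fin n → A) (φ : PPFormula R n)
    (hφ : a ∈ φ.sol A)
    (hgen : ∀ ψ : PPFormula R n, a ∈ ψ.sol A →
      ∀ (N : Type v) [AddCommGroup N] [Module R N], φ.sol N ⊆ ψ.sol N)
    (D₀ : Type v) [AddCommGroup D₀] [Module R D₀] (f : A →ₗ[R] D₀)
    (hf : IsDPreenvelope R D A D₀ f) :
    DGenerates R D φ D₀ (fun i => f (a i)) :=
  ppType_of_preenvelope_generated_general R D A hA n a φ hφ hgen D₀ f hf
end
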